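/- arXiv:0910.5317 — 3 statements merged into one kernel-verified Lean document; each statement's English description precedes it below -/
import Mathlib

section
/- Assume (F1) and (F2), let c ∈ ℝ, and let η : M^{c'} → M^{c'} (for some c' > c) satisfy (η1) and (η2). Suppose the pair (J, η) satisfies (PS)_c. Then for every A ∈ F with sup_{x ∈ A} J(x) = c there exists a point x̄ ∈ A ∩ K_c; in particular the critical set K_c is nonempty. -/
/-!
Take `A ∈ F` with `sup_A J = c`. Since `η(A) ∈ F` and `J ∘ η ≤ J ≤ c` on `A`, the minimax
characterisation forces `sup_A J ∘ η = c` as well, so a maximising sequence of `J ∘ η` in `A`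
is a Palais–Smale sequence; its `(PS)_c` limit lies in `A ∩ K_c` because `A` is closed.
Such an `A` exists: by (F2) the Kuratowski limsup of sets `A_n ∈ F` with
`sup_{A_n} J ↓ c` lies in `F`, and lower semicontinuity keeps `J ≤ c` on it.
-/

open Filter Topology

/-- Kuratowski limit superior of a sequence of subsets of a metric space. -/
def SeqLimsup {X : Type*} [MetricSpace X] (A : ℕ → Set X) : Set X :=
  {x | ∃ φ : ℕ → ℕ, StrictMono φ ∧
    ∃ y : ℕ → X, (∀ n, y n ∈ A (φ n)) ∧ Tendsto y atTop (𝓝 x)}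

open Set

theorem LowerSemicontinuous.le_of_mem_seqLimsup {X γ : Type*} [MetricSpace X]
    [CompleteLinearOrder γ] [TopologicalSpace γ] [OrderTopology γ] {J : X → γ}
    (hJ : LowerSemicontinuous J) {A : ℕ → Set X} {b : ℕ → γ} {c : γ}
    (hA : ∀ n, ∀ x ∈ A n, J x ≤ b n) (hb : Tendsto b atTop (𝓝 c)) {x : X}
    (hx : x ∈ SeqLimsup A) : J x ≤ c := by
  obtain ⟨φ, hφ, y, hyA, hyx⟩ := hx
  calc J x ≤ liminf J (𝓝 x) := hJ.le_liminf x
    _ ≤ liminf (J ∘ y) atTop := liminf_le_liminf_of_le hyx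
    _ ≤ liminf (b ∘ φ) atTop := liminf_le_liminf (Eventually.of_forall fun k => hA _ _ (hyA k))
    _ = c := (hb.comp hφ.tendsto_atTop).liminf_eq

theorem exists_seq_mem_tendsto_of_le_iSup_comp {X γ : Type*} [CompleteLinearOrder γ]
    [TopologicalSpace γ] [OrderTopology γ] [FirstCountableTopology γ] {J : X → γ} {η : X → X}
    {A : Set X} {c : γ} (hA : A.Nonempty) (hJA : ∀ x ∈ A, J x ≤ c)
    (hηA : c ≤ ⨆ x ∈ A, J (η x)) (hη : ∀ x ∈ A, J (η x) ≤ J x) :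
    ∃ u : ℕ → X, (∀ n, u n ∈ A) ∧ Tendsto (J ∘ u) atTop (𝓝 c) ∧
      Tendsto (J ∘ η ∘ u) atTop (𝓝 c) := by
  have hlub : IsLUB ((J ∘ η) '' A) c := by
    refine ⟨?_, fun b hb => hηA.trans (iSup₂_le fun x hx => hb (mem_image_of_mem _ hx))⟩
    rintro _ ⟨x, hx, rfl⟩
    exact (hη x hx).trans (hJA x hx)
  obtain ⟨v, -, -, hv, hvA⟩ := hlub.exists_seq_monotone_tendsto (hA.image _)
  choose u huA hu using hvA
  have hηu : Tendsto (J ∘ η ∘ u) atTop (𝓝 c) := by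
    rwa [show J ∘ η ∘ u = v from funext hu]
  refine ⟨u, huA, ?_, hηu⟩
  exact tendsto_of_tendsto_of_tendsto_of_le_of_le hηu tendsto_const_nhds
    (fun n => hη _ (huA n)) (fun n => hJA _ (huA n))

theorem optimal_set_meets_critical_set_general {X : Type*} [MetricSpace X]
    (F : Set (Set X)) (J : X → EReal) (hJ : LowerSemicontinuous J)
    (c c' : ℝ) (hcc' : c < c')
    (hc : (⨅ A ∈ F, ⨆ x ∈ A, J x) = (c : EReal))
    -- (F1): every member of F is closed
    (hF1 : ∀ A ∈ F, IsClosed A)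
    -- (F2): stability of F under Kuratowski limsup of sequences in the sublevel M^{c'}
    (hF2 : ∀ A : ℕ → Set X, (∀ n, A n ∈ F) →
      (∀ n, ∀ x ∈ A n, J x ≤ (c' : EReal)) → SeqLimsup A ∈ F)
    (η : X → X)
    -- (η1)
    (hη1 : ∀ A ∈ F, (∀ x ∈ A, J x ≤ (c' : EReal)) → η '' A ∈ F)
    -- (η2)
    (hη2 : ∀ x, J x ≤ (c' : EReal) → J (η x) ≤ J x)
    (K : Set X)
    -- (PS)_c
    (hPS : ∀ u : ℕ → X,
      Tendsto (fun n => J (u n)) atTop (𝓝 (c : EReal)) →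
      Tendsto (fun n => J (η (u n))) atTop (𝓝 (c : EReal)) →
      ∃ φ : ℕ → ℕ, StrictMono φ ∧ ∃ y ∈ K, Tendsto (u ∘ φ) atTop (𝓝 y)) :
    (∀ A ∈ F, (⨆ x ∈ A, J x) = (c : EReal) → (A ∩ K).Nonempty) ∧ K.Nonempty := by
  have hc_le : ∀ A ∈ F, (c : EReal) ≤ ⨆ x ∈ A, J x := fun A hA => hc ▸ iInf₂_le A hA
  have meets : ∀ A ∈ F, (⨆ x ∈ A, J x) = (c : EReal) → (A ∩ K).Nonempty := by
    intro A hA hsup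
    have hJA : ∀ x ∈ A, J x ≤ c := fun x hx => hsup ▸ le_iSup₂ (f := fun x _ => J x) x hx
    have hJA' : ∀ x ∈ A, J x ≤ c' := fun x hx => (hJA x hx).trans (EReal.coe_le_coe hcc'.le)
    have hA_ne : A.Nonempty := nonempty_iff_ne_empty.2 fun h => by simp [h] at hsup
    have hηA : (c : EReal) ≤ ⨆ x ∈ A, J (η x) := iSup_image (g := J) ▸ hc_le _ (hη1 A hA hJA')
    obtain ⟨u, huA, hJu, hJηu⟩ := exists_seq_mem_tendsto_of_le_iSup_comp hA_ne hJA hηA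
      fun x hx => hη2 x (hJA' x hx)
    obtain ⟨φ, -, y, hyK, hy⟩ := hPS u hJu hJηu
    exact ⟨y, (hF1 A hA).mem_of_tendsto hy (Eventually.of_forall fun n => huA _), hyK⟩
  refine ⟨meets, ?_⟩
  obtain ⟨b, -, hb, hbc⟩ := exists_seq_strictAnti_tendsto' (EReal.coe_lt_coe hcc')
  have hAb : ∀ n, ∃ A ∈ F, (⨆ x ∈ A, J x) < b n := fun n => lt_biInf_iff.1 (hc ▸ (hb n).1)
  choose A hAF hAb using hAb
  have hJA : ∀ n, ∀ x ∈ A n, J x ≤ b n := fun n x hx =>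
    (le_iSup₂ (f := fun x _ => J x) x hx).trans (hAb n).le
  have hB : SeqLimsup A ∈ F := hF2 A hAF fun n x hx => (hJA n x hx).trans (hb n).2.le
  have hBsup : (⨆ x ∈ SeqLimsup A, J x) = (c : EReal) :=
    le_antisymm (iSup₂_le fun x hx => hJ.le_of_mem_seqLimsup hJA hbc hx) (hc_le _ hB)
  obtain ⟨y, -, hyK⟩ := meets _ hB hBsup
  exact ⟨y, hyK⟩

/-- Assume (F1) and (F2), let the minimax level `c` be real, and let
`η : M^{c'} → M^{c'}` (for some `c' > c`) satisfy (η1) and (η2). Suppose the pair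
`(J, η)` satisfies `(PS)_c`. Then for every `A ∈ F` with `sup_{x ∈ A} J(x) = c`
there exists a point `y ∈ A ∩ K_c`; in particular the critical set `K_c` is
nonempty. -/
theorem optimal_set_meets_critical_set {X : Type*} [MetricSpace X]
    (F : Set (Set X)) (J : X → EReal) (hJ : LowerSemicontinuous J)
    (c c' : ℝ) (hcc' : c < c')
    (hc : (⨅ A ∈ F, ⨆ x ∈ A, J x) = (c : EReal))
    -- (F1): every member of F is closed
    (hF1 : ∀ A ∈ F, IsClosed A)
    -- (F2): stability of F under Kuratowski limsup of sequences in the sublevel M^{c'}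
    (hF2 : ∀ A : ℕ → Set X, (∀ n, A n ∈ F) →
      (∀ n, ∀ x ∈ A n, J x ≤ (c' : EReal)) → SeqLimsup A ∈ F)
    -- η maps the sublevel M^{c'} into itself
    (η : X → X) (hηmap : ∀ x, J x ≤ (c' : EReal) → J (η x) ≤ (c' : EReal))
    -- (η1)
    (hη1 : ∀ A ∈ F, (∀ x ∈ A, J x ≤ (c' : EReal)) → η '' A ∈ F)
    -- (η2)
    (hη2 : ∀ x, J x ≤ (c' : EReal) → J (η x) ≤ J x)
    -- the critical set of J relative to η at level c
    (K : Set X) (hK : K = {x | J x = (c : EReal) ∧ J (η x) = (c : EReal)})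
    -- (PS)_c
    (hPS : ∀ u : ℕ → X,
      Tendsto (fun n => J (u n)) atTop (𝓝 (c : EReal)) →
      Tendsto (fun n => J (η (u n))) atTop (𝓝 (c : EReal)) →
      ∃ φ : ℕ → ℕ, StrictMono φ ∧ ∃ y ∈ K, Tendsto (u ∘ φ) atTop (𝓝 y)) :
    (∀ A ∈ F, (⨆ x ∈ A, J x) = (c : EReal) → (A ∩ K).Nonempty) ∧ K.Nonempty :=
  optimal_set_meets_critical_set_general F J hJ c c' hcc' hc hF1 hF2 η hη1 hη2 K hPS
end

section
/- Assume (J), (F1) and (F2'), suppose c_β ∈ ℝ for every 0 < β ≤ +∞, and for each 0 < β ≤ +∞ let η_β : M_β^{c_∞+1} → M_β^{c_∞+1} satisfy (η1)_β and (η2)_β, with the pair (J_β, η_β) satisfying (PS)_{c_β}. Then for every 0 < β ≤ +∞ every optimal set for J_β at c_β intersects K_β; in particular, K_β is nonempty. -/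
/-!
For an optimal set `A`, the deformed set `η '' A` is again admissible, so the supremum of `J`
over it is at least `c`, while `J ∘ η ≤ J ≤ c` on `A`. Hence some sequence in `A` has both
`J` and `J ∘ η` tending to `c`; (PS) extracts a subsequence converging to a point of `K`, which
lies in `A` because `A` is closed.

Optimal sets exist: choose `A n ∈ F` whose suprema decrease to `c`; by (F2') their Kuratowski
limit superior is in `F`, and lower semicontinuity bounds `J` by `c` on it. At `β = ∞`, `J_∞` is
lower semicontinuous as a supremum of such functionals, and `J_1 ≤ J_∞` makes (F2') applicable.
-/

open Filter Topology

open Set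

section

variable {X α : Type*}

section Minimax

variable [CompleteLinearOrder α]

def minimaxLevel (F : Set (Set X)) (f : X → α) : α :=
  ⨅ A ∈ F, ⨆ x ∈ A, f x

theorem minimaxLevel_mono {F : Set (Set X)} {f g : X → α} (h : ∀ x, f x ≤ g x) :
    minimaxLevel F f ≤ minimaxLevel F g :=
  iInf₂_mono fun _ _ => iSup₂_mono fun x _ => h x

variable [TopologicalSpace α]

def PalaisSmaleAt [TopologicalSpace X] (f : X → α) (η : X → X) (K : Set X) (c : α) : Prop :=
  ∀ u : ℕ → X, Tendsto (fun n => f (u n)) atTop (𝓝 c) →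
    Tendsto (fun n => f (η (u n))) atTop (𝓝 c) →
    ∃ φ : ℕ → ℕ, StrictMono φ ∧ ∃ y ∈ K, Tendsto (u ∘ φ) atTop (𝓝 y)

variable [OrderTopology α]

theorem exists_seq_tendsto_of_deformation [FirstCountableTopology α]
    {f : X → α} {η : X → X} {A : Set X} {c : α} (hA : A.Nonempty)
    (hle : ∀ x ∈ A, f x ≤ c) (hη : ∀ x ∈ A, f (η x) ≤ f x) (hc : c ≤ ⨆ x ∈ η '' A, f x) :
    ∃ u : ℕ → X, (∀ n, u n ∈ A) ∧ Tendsto (fun n => f (u n)) atTop (𝓝 c) ∧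
      Tendsto (fun n => f (η (u n))) atTop (𝓝 c) := by
  have hlub : IsLUB ((f ∘ η) '' A) c := by
    refine ⟨?_, fun b hb => hc.trans ?_⟩
    · rintro _ ⟨x, hx, rfl⟩
      exact (hη x hx).trans (hle x hx)
    · rw [iSup_image]
      exact iSup₂_le fun x hx => hb (mem_image_of_mem _ hx)
  obtain ⟨v, -, -, hv, hvA⟩ := hlub.exists_seq_monotone_tendsto (hA.image _)
  choose u hu hvu using hvA
  have hηu : Tendsto (fun n => f (η (u n))) atTop (𝓝 c) :=
    hv.congr fun n => (hvu n).symm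
  refine ⟨u, hu, ?_, hηu⟩
  exact tendsto_of_tendsto_of_tendsto_of_le_of_le hηu tendsto_const_nhds
    (fun n => hη _ (hu n)) (fun n => hle _ (hu n))

theorem PalaisSmaleAt.inter_nonempty_of_optimal [FirstCountableTopology α] [TopologicalSpace X]
    {F : Set (Set X)} {f : X → α} {η : X → X} {K : Set X} {b c : α}
    (hPS : PalaisSmaleAt f η K c) (hc : minimaxLevel F f = c) (hc_ne_bot : c ≠ ⊥) (hcb : c ≤ b)
    (hη1 : ∀ A ∈ F, (∀ x ∈ A, f x ≤ b) → η '' A ∈ F) (hη2 : ∀ x, f x ≤ b → f (η x) ≤ f x)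
    {A : Set X} (hA : A ∈ F) (hA_closed : IsClosed A) (hopt : ⨆ x ∈ A, f x = c) :
    (A ∩ K).Nonempty := by
  have hle : ∀ x ∈ A, f x ≤ c := fun x hx => hopt ▸ le_iSup₂ (f := fun x (_ : x ∈ A) => f x) x hx
  have hA_ne : A.Nonempty := nonempty_iff_ne_empty.mpr fun hA_empty =>
    hc_ne_bot (by simpa only [hA_empty, mem_empty_iff_false, iSup_false, iSup_bot] using hopt.symm)
  have hηA : η '' A ∈ F := hη1 A hA fun x hx => (hle x hx).trans hcb
  obtain ⟨u, hu, hfu, hfηu⟩ := exists_seq_tendsto_of_deformation hA_ne hle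
    (fun x hx => hη2 x ((hle x hx).trans hcb)) (hc ▸ iInf₂_le _ hηA)
  obtain ⟨φ, -, y, hyK, hy⟩ := hPS u hfu hfηu
  exact ⟨y, hA_closed.mem_of_tendsto hy (Eventually.of_forall fun n => hu (φ n)), hyK⟩

end Minimax

theorem LowerSemicontinuous.le_of_tendsto_of_le {ι : Type*} [TopologicalSpace X] [LinearOrder α]
    [DenselyOrdered α] [TopologicalSpace α] [OrderTopology α] {f : X → α}
    (hf : LowerSemicontinuous f) {l : Filter ι} [l.NeBot] {y : ι → X} {v : ι → α} {x : X} {c : α}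
    (hy : Tendsto y l (𝓝 x)) (hv : Tendsto v l (𝓝 c)) (hle : ∀ i, f (y i) ≤ v i) : f x ≤ c :=
  le_of_forall_lt_imp_le_of_dense fun m hm =>
    ge_of_tendsto hv ((hy.eventually (hf x m hm)).mono fun i hi => (hi.trans_le (hle i)).le)

theorem exists_optimal_of_seqLimsup_mem [MetricSpace X] [CompleteLinearOrder α]
    [DenselyOrdered α] [TopologicalSpace α] [OrderTopology α] [FirstCountableTopology α]
    {F : Set (Set X)} {f : X → α} {b c : α} (hf : LowerSemicontinuous f)
    (hc : minimaxLevel F f = c) (hcb : c < b)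
    (hF2 : ∀ A : ℕ → Set X, (∀ n, A n ∈ F) → (∀ n, ∀ x ∈ A n, f x ≤ b) → SeqLimsup A ∈ F) :
    ∃ A ∈ F, ⨆ x ∈ A, f x = c := by
  obtain ⟨v, -, hv_mem, hv⟩ := exists_seq_strictAnti_tendsto' hcb
  have hex : ∀ n, ∃ A ∈ F, ⨆ x ∈ A, f x < v n := fun n => by
    have : minimaxLevel F f < v n := hc ▸ (hv_mem n).1
    simpa only [minimaxLevel, iInf_lt_iff, exists_prop] using this
  choose A hAF hAv using hex
  have hAle : ∀ n, ∀ x ∈ A n, f x ≤ v n := fun n x hx =>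
    (le_iSup₂ (f := fun x (_ : x ∈ A n) => f x) x hx).trans (hAv n).le
  have hL : SeqLimsup A ∈ F := hF2 A hAF fun n x hx => (hAle n x hx).trans (hv_mem n).2.le
  refine ⟨SeqLimsup A, hL, le_antisymm (iSup₂_le ?_) (hc ▸ iInf₂_le _ hL)⟩
  rintro x ⟨φ, hφ, y, hy, hyx⟩
  exact hf.le_of_tendsto_of_le hyx (hv.comp hφ.tendsto_atTop) fun k => hAle _ _ (hy k)

end

theorem optimal_sets_meet_critical_sets_general {X : Type*} [MetricSpace X]
    (F : Set (Set X)) (J : ℝ → X → EReal)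
    -- each J_β, β > 0, is lower semicontinuous
    (hlsc : ∀ β : ℝ, 0 < β → LowerSemicontinuous (J β))
    -- the limit functional J_∞
    (Jinf : X → EReal) (hJinf : ∀ x, Jinf x = ⨆ β : ℝ, ⨆ _ : 0 < β, J β x)
    -- the minimax levels c_β, 0 < β < +∞, and c_∞; all of them real
    (cβ : ℝ → EReal) (hcβ : ∀ β : ℝ, cβ β = ⨅ A ∈ F, ⨆ x ∈ A, J β x)
    (cinf : ℝ) (hcinf : (⨅ A ∈ F, ⨆ x ∈ A, Jinf x) = (cinf : EReal))
    (hcreal : ∀ β : ℝ, 0 < β → ∃ r : ℝ, cβ β = (r : EReal))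
    -- assumption (F1)
    (hF1 : ∀ A ∈ F, IsClosed A)
    -- assumption (F2')
    (hF2' : ∀ A : ℕ → Set X, (∀ n, A n ∈ F) →
      (∃ β : ℝ, 0 < β ∧ ∀ n, ∀ x ∈ A n, J β x ≤ (cinf : EReal) + 1) →
      SeqLimsup A ∈ F)
    -- the deformations η_β, 0 < β < +∞, mapping M_β^{c_∞+1} into itself
    (η : ℝ → X → X)
    -- (η1)_β
    (hη1 : ∀ β : ℝ, 0 < β → ∀ A ∈ F, (∀ x ∈ A, J β x ≤ (cinf : EReal) + 1) →
      (η β) '' A ∈ F)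
    -- (η2)_β
    (hη2 : ∀ β : ℝ, 0 < β → ∀ x, J β x ≤ (cinf : EReal) + 1 →
      J β (η β x) ≤ J β x)
    -- the deformation η_∞, mapping M_∞^{c_∞+1} into itself
    (ηinf : X → X)
    -- (η1)_∞
    (hη1inf : ∀ A ∈ F, (∀ x ∈ A, Jinf x ≤ (cinf : EReal) + 1) → ηinf '' A ∈ F)
    -- (η2)_∞
    (hη2inf : ∀ x, Jinf x ≤ (cinf : EReal) + 1 → Jinf (ηinf x) ≤ Jinf x)
    -- the critical sets K_β, 0 < β < +∞, and K_∞
    (K : ℝ → Set X)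
    (Kinf : Set X)
    -- (PS)_{c_β} for 0 < β < +∞
    (hPS : ∀ β : ℝ, 0 < β → ∀ u : ℕ → X,
      Tendsto (fun n => J β (u n)) atTop (𝓝 (cβ β)) →
      Tendsto (fun n => J β (η β (u n))) atTop (𝓝 (cβ β)) →
      ∃ φ : ℕ → ℕ, StrictMono φ ∧ ∃ y ∈ K β, Tendsto (u ∘ φ) atTop (𝓝 y))
    -- (PS)_{c_∞}
    (hPSinf : ∀ u : ℕ → X,
      Tendsto (fun n => Jinf (u n)) atTop (𝓝 (cinf : EReal)) →
      Tendsto (fun n => Jinf (ηinf (u n))) atTop (𝓝 (cinf : EReal)) →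
      ∃ φ : ℕ → ℕ, StrictMono φ ∧ ∃ y ∈ Kinf, Tendsto (u ∘ φ) atTop (𝓝 y)) :
    (∀ β : ℝ, 0 < β →
      (∀ A ∈ F, (⨆ x ∈ A, J β x) = cβ β → (A ∩ K β).Nonempty) ∧ (K β).Nonempty) ∧
    (∀ A ∈ F, (⨆ x ∈ A, Jinf x) = (cinf : EReal) → (A ∩ Kinf).Nonempty) ∧
    Kinf.Nonempty := by
  have hJle : ∀ β, 0 < β → ∀ x, J β x ≤ Jinf x := fun β hβ x =>
    (hJinf x).symm ▸ le_iSup₂ (f := fun β (_ : 0 < β) => J β x) β hβ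
  have hJinf_lsc : LowerSemicontinuous Jinf := by
    rw [funext hJinf]
    exact lowerSemicontinuous_biSup hlsc
  have hcinf_lt : (cinf : EReal) < cinf + 1 := by exact_mod_cast lt_add_one cinf
  have hoptinf : ∀ A ∈ F, (⨆ x ∈ A, Jinf x) = cinf → (A ∩ Kinf).Nonempty := fun A hA =>
    PalaisSmaleAt.inter_nonempty_of_optimal hPSinf hcinf (EReal.coe_ne_bot cinf) hcinf_lt.le
      hη1inf hη2inf hA (hF1 A hA)
  refine ⟨fun β hβ => ?_, hoptinf, ?_⟩
  · obtain ⟨r, hr⟩ := hcreal β hβ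
    have hcb : cβ β < cinf + 1 :=
      ((hcβ β).trans_le (hcinf ▸ minimaxLevel_mono (hJle β hβ))).trans_lt hcinf_lt
    have hopt : ∀ A ∈ F, (⨆ x ∈ A, J β x) = cβ β → (A ∩ K β).Nonempty := fun A hA =>
      PalaisSmaleAt.inter_nonempty_of_optimal (hPS β hβ) (hcβ β).symm (hr ▸ EReal.coe_ne_bot r)
        hcb.le (hη1 β hβ) (hη2 β hβ) hA (hF1 A hA)
    obtain ⟨A, hA, hA_opt⟩ := exists_optimal_of_seqLimsup_mem (hlsc β hβ) (hcβ β).symm hcb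
      fun A hAF hbd => hF2' A hAF ⟨β, hβ, hbd⟩
    exact ⟨hopt, (hopt A hA hA_opt).right⟩
  · obtain ⟨A, hA, hA_opt⟩ := exists_optimal_of_seqLimsup_mem hJinf_lsc hcinf hcinf_lt
      fun A hAF hbd => hF2' A hAF ⟨1, one_pos, fun n x hx => (hJle 1 one_pos x).trans (hbd n x hx)⟩
    exact (hoptinf A hA hA_opt).right

/-- Assume (J), (F1) and (F2'), suppose the minimax levels `c_β` are real for
every `0 < β ≤ +∞`, and for each `0 < β ≤ +∞` let
`η_β : M_β^{c_∞+1} → M_β^{c_∞+1}` satisfy `(η1)_β` and `(η2)_β`, with the pair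
`(J_β, η_β)` satisfying `(PS)_{c_β}`. Then, for every `0 < β ≤ +∞`, every
optimal set for `J_β` at `c_β` intersects `K_β`; in particular, `K_β` is
nonempty. -/
theorem optimal_sets_meet_critical_sets {X : Type*} [MetricSpace X]
    (F : Set (Set X)) (J : ℝ → X → EReal)
    -- each J_β, β > 0, is lower semicontinuous
    (hlsc : ∀ β : ℝ, 0 < β → LowerSemicontinuous (J β))
    -- assumption (J): monotonicity in β on (0, +∞)
    (hmono : ∀ β₁ β₂ : ℝ, 0 < β₁ → β₁ ≤ β₂ → ∀ x, J β₁ x ≤ J β₂ x)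
    -- the limit functional J_∞
    (Jinf : X → EReal) (hJinf : ∀ x, Jinf x = ⨆ β : ℝ, ⨆ _ : 0 < β, J β x)
    -- the minimax levels c_β, 0 < β < +∞, and c_∞; all of them real
    (cβ : ℝ → EReal) (hcβ : ∀ β : ℝ, cβ β = ⨅ A ∈ F, ⨆ x ∈ A, J β x)
    (cinf : ℝ) (hcinf : (⨅ A ∈ F, ⨆ x ∈ A, Jinf x) = (cinf : EReal))
    (hcreal : ∀ β : ℝ, 0 < β → ∃ r : ℝ, cβ β = (r : EReal))
    -- assumption (F1)
    (hF1 : ∀ A ∈ F, IsClosed A)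
    -- assumption (F2')
    (hF2' : ∀ A : ℕ → Set X, (∀ n, A n ∈ F) →
      (∃ β : ℝ, 0 < β ∧ ∀ n, ∀ x ∈ A n, J β x ≤ (cinf : EReal) + 1) →
      SeqLimsup A ∈ F)
    -- the deformations η_β, 0 < β < +∞, mapping M_β^{c_∞+1} into itself
    (η : ℝ → X → X)
    (hηmap : ∀ β : ℝ, 0 < β → ∀ x, J β x ≤ (cinf : EReal) + 1 →
      J β (η β x) ≤ (cinf : EReal) + 1)
    -- (η1)_β
    (hη1 : ∀ β : ℝ, 0 < β → ∀ A ∈ F, (∀ x ∈ A, J β x ≤ (cinf : EReal) + 1) →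
      (η β) '' A ∈ F)
    -- (η2)_β
    (hη2 : ∀ β : ℝ, 0 < β → ∀ x, J β x ≤ (cinf : EReal) + 1 →
      J β (η β x) ≤ J β x)
    -- the deformation η_∞, mapping M_∞^{c_∞+1} into itself
    (ηinf : X → X)
    (hηinfmap : ∀ x, Jinf x ≤ (cinf : EReal) + 1 →
      Jinf (ηinf x) ≤ (cinf : EReal) + 1)
    -- (η1)_∞
    (hη1inf : ∀ A ∈ F, (∀ x ∈ A, Jinf x ≤ (cinf : EReal) + 1) → ηinf '' A ∈ F)
    -- (η2)_∞
    (hη2inf : ∀ x, Jinf x ≤ (cinf : EReal) + 1 → Jinf (ηinf x) ≤ Jinf x)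
    -- the critical sets K_β, 0 < β < +∞, and K_∞
    (K : ℝ → Set X)
    (hKdef : ∀ β : ℝ, K β = {x | J β x = cβ β ∧ J β (η β x) = cβ β})
    (Kinf : Set X)
    (hKinfdef : Kinf = {x | Jinf x = (cinf : EReal) ∧ Jinf (ηinf x) = (cinf : EReal)})
    -- (PS)_{c_β} for 0 < β < +∞
    (hPS : ∀ β : ℝ, 0 < β → ∀ u : ℕ → X,
      Tendsto (fun n => J β (u n)) atTop (𝓝 (cβ β)) →
      Tendsto (fun n => J β (η β (u n))) atTop (𝓝 (cβ β)) →
      ∃ φ : ℕ → ℕ, StrictMono φ ∧ ∃ y ∈ K β, Tendsto (u ∘ φ) atTop (𝓝 y))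
    -- (PS)_{c_∞}
    (hPSinf : ∀ u : ℕ → X,
      Tendsto (fun n => Jinf (u n)) atTop (𝓝 (cinf : EReal)) →
      Tendsto (fun n => Jinf (ηinf (u n))) atTop (𝓝 (cinf : EReal)) →
      ∃ φ : ℕ → ℕ, StrictMono φ ∧ ∃ y ∈ Kinf, Tendsto (u ∘ φ) atTop (𝓝 y)) :
    (∀ β : ℝ, 0 < β →
      (∀ A ∈ F, (⨆ x ∈ A, J β x) = cβ β → (A ∩ K β).Nonempty) ∧ (K β).Nonempty) ∧
    (∀ A ∈ F, (⨆ x ∈ A, Jinf x) = (cinf : EReal) → (A ∩ Kinf).Nonempty) ∧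
    Kinf.Nonempty :=
  optimal_sets_meet_critical_sets_general F J hlsc Jinf hJinf cβ hcβ cinf hcinf hcreal hF1 hF2' η
    hη1 hη2 ηinf hη1inf hη2inf K Kinf hPS hPSinf
end

section
/- Let (X, d) be a metric space, K ⊆ X a compact set, and (A_n) a sequence of subsets of K. Then for every δ > 0 there exists n₀ ∈ ℕ such that A_n ⊆ N_δ(limsup_n A_n) for all n ≥ n₀, where N_δ(B) = {x ∈ X : dist(x, B) < δ}. -/
/-!
Let `F` be the closed set of points at distance at least `δ` from `limsup A_n`. If `A_n ∩ F`
were nonempty for infinitely many `n`, then by compactness of `K` the sets `A_n ∩ F` would have a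
nonempty limsup; a point of it lies in `limsup A_n` and, `F` being closed, also in `F`, which is
absurd since its distance to `limsup A_n` is `0 < δ`.
-/

open Filter Topology

section

variable {X : Type*} [MetricSpace X]

theorem seqLimsup_mono {A B : ℕ → Set X} (hAB : ∀ n, A n ⊆ B n) :
    SeqLimsup A ⊆ SeqLimsup B := by
  rintro x ⟨φ, hφ, y, hyA, hyx⟩
  exact ⟨φ, hφ, y, fun n => hAB (φ n) (hyA n), hyx⟩

theorem seqLimsup_subset_of_isClosed {A : ℕ → Set X} {C : Set X} (hC : IsClosed C)
    (hAC : ∀ n, A n ⊆ C) : SeqLimsup A ⊆ C := by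
  rintro x ⟨φ, -, y, hyA, hyx⟩
  exact hC.mem_of_tendsto hyx (Eventually.of_forall fun n => hAC (φ n) (hyA n))

theorem seqLimsup_nonempty_of_frequently_nonempty {K : Set X} (hK : IsCompact K)
    {A : ℕ → Set X} (hAK : ∀ n, A n ⊆ K) (hA : ∃ᶠ n in atTop, (A n).Nonempty) :
    (SeqLimsup A).Nonempty := by
  obtain ⟨φ, hφ, hAφ⟩ := extraction_of_frequently_atTop hA
  choose y hyA using hAφ
  obtain ⟨x, -, ψ, hψ, hyx⟩ := hK.tendsto_subseq fun n => hAK (φ n) (hyA n)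
  exact ⟨x, φ ∘ ψ, hφ.comp hψ, y ∘ ψ, fun n => hyA (ψ n), hyx⟩

end

/-- Let `K ⊆ X` be compact and `(A_n)` a sequence of subsets of `K`. Then for
every `δ > 0` there exists `n₀` such that `A_n ⊆ N_δ(limsup_n A_n)` for all
`n ≥ n₀`, where `N_δ(B) = {x : dist(x, B) < δ}`. -/
theorem subsets_eventually_in_nbhd_of_seqLimsup {X : Type*} [MetricSpace X]
    (K : Set X) (hK : IsCompact K)
    (A : ℕ → Set X) (hAsub : ∀ n, A n ⊆ K) :
    ∀ δ : ℝ, 0 < δ → ∃ n₀ : ℕ, ∀ n ≥ n₀,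
      A n ⊆ {x : X | Metric.infDist x (SeqLimsup A) < δ} := by
  intro δ hδ
  set far := {x : X | δ ≤ Metric.infDist x (SeqLimsup A)}
  have hfar : IsClosed far := isClosed_le continuous_const (Metric.continuous_infDist_pt _)
  suffices ¬∃ᶠ n in atTop, (A n ∩ far).Nonempty by
    obtain ⟨n₀, hn₀⟩ := eventually_atTop.1 (not_frequently.1 this)
    refine ⟨n₀, fun n hn x hx => ?_⟩
    by_contra hxfar
    exact hn₀ n hn ⟨x, hx, show δ ≤ _ from le_of_not_gt hxfar⟩
  intro hfreq
  obtain ⟨x, hx⟩ := seqLimsup_nonempty_of_frequently_nonempty hK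
    (fun n => Set.inter_subset_left.trans (hAsub n)) hfreq
  have hxL : x ∈ SeqLimsup A := seqLimsup_mono (fun _ => Set.inter_subset_left) hx
  have hxfar : x ∈ far := seqLimsup_subset_of_isClosed hfar (fun _ => Set.inter_subset_right) hx
  have : δ ≤ 0 := Metric.infDist_zero_of_mem hxL ▸ hxfar
  linarith
end
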